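/- Let α = 2^(1/36). For every real number q with 1/5 ≤ q ≤ 2/5, one has (1 − q)·α⁻¹ + q·α³ ≤ (5q)^(1/12), where the right-hand side is the real power (5q)^(1/12) (note that α^(3·log₂(5q)) = (5q)^(1/12)). -/
import Mathlib


theorem stmt_8 (q : ℝ) (hq1 : 1 / 5 ≤ q) (hq2 : q ≤ 2 / 5) :
    (1 - q) * ((2 : ℝ) ^ ((1 : ℝ) / 36))⁻¹ + q * ((2 : ℝ) ^ ((1 : ℝ) / 36)) ^ 3
      ≤ (5 * q) ^ ((1 : ℝ) / 12) := by
  set x : ℝ := (2 : ℝ) ^ ((1 : ℝ) / 36) with hxdef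
  have hx0 : (0 : ℝ) < x := Real.rpow_pos_of_pos (by norm_num) _
  have hx1 : (1 : ℝ) ≤ x := Real.one_le_rpow (by norm_num) (by norm_num)
  have hx36 : x ^ 36 = 2 := by
    rw [hxdef, ← Real.rpow_natCast (_ ^ _), ← Real.rpow_mul (by norm_num)]
    norm_num
  have hxle : x ≤ 1.02 := by
    by_contra h
    push_neg at h
    have h2 : (1.02 : ℝ) ^ 36 < x ^ 36 :=
      pow_lt_pow_left₀ h (by norm_num) (by norm_num)
    rw [hx36] at h2
    norm_num at h2
  -- concavity of t ↦ t ^ (1/12) on [1,2]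
  have hconc : StrictConcaveOn ℝ (Set.Ici (0:ℝ)) fun t : ℝ => t ^ ((1:ℝ)/12) :=
    Real.strictConcaveOn_rpow (by norm_num) (by norm_num)
  have key := hconc.concaveOn.2 (Set.mem_Ici.2 (by norm_num : (0:ℝ) ≤ 1))
    (Set.mem_Ici.2 (by norm_num : (0:ℝ) ≤ 2))
    (by linarith : (0:ℝ) ≤ 2 - 5 * q) (by linarith : (0:ℝ) ≤ 5 * q - 1)
    (by ring)
  simp only [smul_eq_mul] at key
  have h1 : (1:ℝ) ^ ((1:ℝ)/12) = 1 := Real.one_rpow _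
  have hcomb : (2 - 5*q) * 1 + (5*q - 1) * 2 = 5 * q := by ring
  rw [hcomb, h1] at key
  have hx3 : x ^ 3 = (2:ℝ) ^ ((1:ℝ)/12) := by
    rw [hxdef, ← Real.rpow_natCast (_ ^ _), ← Real.rpow_mul (by norm_num)]
    norm_num
  -- it suffices to beat the chord
  have main : (1 - q) * x⁻¹ + q * x ^ 3 ≤ (2 - 5*q) * 1 + (5*q - 1) * x ^ 3 := by
    have hxc : x ^ 3 + x ^ 2 + x ≤ 4 := by
      nlinarith [mul_nonneg hx0.le (sub_nonneg.2 hxle),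
        mul_nonneg (mul_nonneg hx0.le hx0.le) (sub_nonneg.2 hxle)]
    have hA : x ^ 4 - 5 * x + 4 ≤ 0 := by
      nlinarith [mul_nonneg (sub_nonneg.2 hx1) (sub_nonneg.2 hxc)]
    have hB : (1 : ℝ) ≤ x ^ 4 := by nlinarith [hx1, sq_nonneg (x ^ 2 - 1)]
    have h : (1 - q) + q * x ^ 4 ≤ ((2 - 5*q) * 1 + (5*q - 1) * x ^ 3) * x := by
      nlinarith [mul_nonneg (by linarith : (0:ℝ) ≤ 2 - 5 * q)
          (by linarith : (0:ℝ) ≤ 5 * x - 4 - x ^ 4),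
        mul_nonneg (by linarith : (0:ℝ) ≤ 5 * q - 1)
          (by linarith : (0:ℝ) ≤ x ^ 4 - 1)]
    calc (1 - q) * x⁻¹ + q * x ^ 3
        = ((1 - q) + q * x ^ 4) * x⁻¹ := by field_simp
      _ ≤ (((2 - 5*q) * 1 + (5*q - 1) * x ^ 3) * x) * x⁻¹ := by
          apply mul_le_mul_of_nonneg_right h (inv_nonneg.2 hx0.le)
      _ = (2 - 5*q) * 1 + (5*q - 1) * x ^ 3 := by field_simp
  rw [hx3] at main
  rw [hx3]
  linarith [key, main]
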